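/- Assume g² < g₁g₂, 0 < g₁ ≤ g₂ and 0 < g < (g₁ + √(g₁² + 8g₁g₂))/4, and let Ω > 0. For every (u₁,u₂) ∈ ℋ one has Ω Σ_{j=1}^2 | ∫_{ℝ²} x⊥·(iu_j,∇u_j) dx | ≤ Σ_{j=1}^2 ∫_{ℝ²} |∇u_j|²/4 dx + 2Ω²(R₁,₀² + R₂,₀²) + (2Ω²g₁Γ/Γ₂) ∫_{ℝ²∖D₁} a₁,₀⁻ |u₁|² dx + 2Ω²g₂ ∫_{ℝ²∖D₂} (a₂,₀ + (g/g₂)a₁,₀)⁻ |u₂|² dx, where D_i = B_{R_{i,0}} and f⁻ denotes the negative part of f. -/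
import Mathlib


open MeasureTheory Filter
open scoped Real Topology

noncomputable section

abbrev Pt := EuclideanSpace ℝ (Fin 2)

/-- The Laplacian, written as the sum of second directional derivatives along
the coordinate axes. -/
def lapR (f : Pt → ℝ) (x : Pt) : ℝ :=
  ∑ i : Fin 2, iteratedDeriv 2 (fun t : ℝ => f (x + t • EuclideanSpace.single i (1:ℝ))) 0

/-- Membership of one component in the admissible space ℋ. -/
def InH (u : Pt → ℂ) : Prop :=
  Integrable (fun x : Pt => ‖u x‖ ^ 2) ∧
  Integrable (fun x : Pt => ‖fderiv ℝ u x‖ ^ 2) ∧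
  Integrable (fun x : Pt => ‖x‖ ^ 2 * ‖u x‖ ^ 2) ∧
  (∫ x : Pt, ‖u x‖ ^ 2) = 1

/-- The two-component Gross–Pitaevskii energy without rotation. -/
def E0 (g₁ g₂ g ε : ℝ) (u₁ u₂ : Pt → ℂ) : ℝ :=
  (∫ x : Pt, (‖fderiv ℝ u₁ x‖ ^ 2 / 2 + ‖x‖ ^ 2 * ‖u₁ x‖ ^ 2 / (2 * ε ^ 2)
      + g₁ * ‖u₁ x‖ ^ 4 / (4 * ε ^ 2))) +
  (∫ x : Pt, (‖fderiv ℝ u₂ x‖ ^ 2 / 2 + ‖x‖ ^ 2 * ‖u₂ x‖ ^ 2 / (2 * ε ^ 2)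
      + g₂ * ‖u₂ x‖ ^ 4 / (4 * ε ^ 2))) +
  (g / (2 * ε ^ 2)) * ∫ x : Pt, ‖u₁ x‖ ^ 2 * ‖u₂ x‖ ^ 2

/-- A real function viewed as complex valued. -/
def cmplx (η : Pt → ℝ) : Pt → ℂ := fun x => (η x : ℂ)

/-- `(η₁, η₂)` is a positive minimizer of `E0` in ℋ. -/
def PosMinimizer (g₁ g₂ g ε : ℝ) (η₁ η₂ : Pt → ℝ) : Prop :=
  (∀ x, 0 < η₁ x) ∧ (∀ x, 0 < η₂ x) ∧ InH (cmplx η₁) ∧ InH (cmplx η₂) ∧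
  ∀ u₁ u₂ : Pt → ℂ, InH u₁ → InH u₂ →
    E0 g₁ g₂ g ε (cmplx η₁) (cmplx η₂) ≤ E0 g₁ g₂ g ε u₁ u₂

/-- The angular-momentum density `x⊥ · (iu, ∇u)`. -/
def rotDen (u : Pt → ℂ) (x : Pt) : ℝ :=
  (-(x 1)) * (Complex.I * u x *
      (starRingEnd ℂ) (fderiv ℝ u x (EuclideanSpace.single (0 : Fin 2) (1:ℝ)))).re +
  x 0 * (Complex.I * u x *
      (starRingEnd ℂ) (fderiv ℝ u x (EuclideanSpace.single (1 : Fin 2) (1:ℝ)))).re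

/-- The two-component Gross–Pitaevskii energy with rotation `Om`. -/
def EOm (g₁ g₂ g ε Om : ℝ) (u₁ u₂ : Pt → ℂ) : ℝ :=
  (∫ x : Pt, (‖fderiv ℝ u₁ x‖ ^ 2 / 2 + ‖x‖ ^ 2 * ‖u₁ x‖ ^ 2 / (2 * ε ^ 2)
      + g₁ * ‖u₁ x‖ ^ 4 / (4 * ε ^ 2) - Om * rotDen u₁ x)) +
  (∫ x : Pt, (‖fderiv ℝ u₂ x‖ ^ 2 / 2 + ‖x‖ ^ 2 * ‖u₂ x‖ ^ 2 / (2 * ε ^ 2)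
      + g₂ * ‖u₂ x‖ ^ 4 / (4 * ε ^ 2) - Om * rotDen u₂ x)) +
  (g / (2 * ε ^ 2)) * ∫ x : Pt, ‖u₁ x‖ ^ 2 * ‖u₂ x‖ ^ 2

/-- `(u₁, u₂)` is a minimizer of `EOm` in ℋ. -/
def OmMinimizer (g₁ g₂ g ε Om : ℝ) (u₁ u₂ : Pt → ℂ) : Prop :=
  InH u₁ ∧ InH u₂ ∧ ∀ v₁ v₂ : Pt → ℂ, InH v₁ → InH v₂ →
    EOm g₁ g₂ g ε Om u₁ u₂ ≤ EOm g₁ g₂ g ε Om v₁ v₂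

def Gam1 (g₁ g : ℝ) : ℝ := 1 - g / g₁
def Gam2 (g₂ g : ℝ) : ℝ := 1 - g / g₂
def Gam0 (g₁ g₂ g : ℝ) : ℝ := 1 - g ^ 2 / (g₁ * g₂)
def R10 (g₁ g₂ g : ℝ) : ℝ :=
  (2 * g₁ * Gam0 g₁ g₂ g / (Real.pi * Gam2 g₂ g)) ^ ((1:ℝ)/4)
def R20 (g₁ g₂ g : ℝ) : ℝ := (2 * (g₂ + g) / Real.pi) ^ ((1:ℝ)/4)
def lam10 (g₁ g₂ g : ℝ) : ℝ :=
  g / g₂ * R20 g₁ g₂ g ^ 2 + Gam2 g₂ g * R10 g₁ g₂ g ^ 2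
def lam20 (g₁ g₂ g : ℝ) : ℝ := R20 g₁ g₂ g ^ 2
def a10 (g₁ g₂ g : ℝ) (x : Pt) : ℝ :=
  Gam2 g₂ g / (g₁ * Gam0 g₁ g₂ g) * (R10 g₁ g₂ g ^ 2 - ‖x‖ ^ 2)
def a20 (g₁ g₂ g : ℝ) (x : Pt) : ℝ :=
  (R20 g₁ g₂ g ^ 2 - R10 g₁ g₂ g ^ 2) / g₂
    + Gam1 g₁ g / (g₂ * Gam0 g₁ g₂ g) * (R10 g₁ g₂ g ^ 2 - ‖x‖ ^ 2)
/-- The limiting profile `a₁` (two-disks case). -/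
def aProf1 (g₁ g₂ g : ℝ) (x : Pt) : ℝ :=
  if ‖x‖ ≤ R10 g₁ g₂ g then a10 g₁ g₂ g x else 0
/-- The limiting profile `a₂` (two-disks case). -/
def aProf2 (g₁ g₂ g : ℝ) (x : Pt) : ℝ :=
  if ‖x‖ ≤ R10 g₁ g₂ g then a20 g₁ g₂ g x
  else if ‖x‖ ≤ R20 g₁ g₂ g then (R20 g₁ g₂ g ^ 2 - ‖x‖ ^ 2) / g₂ else 0
/-- Negative part of a real number. -/
def nPart (t : ℝ) : ℝ := max (-t) 0

lemma rotDen_abs_le_aux (u : Pt → ℂ) (x : Pt) :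
    |rotDen u x| ≤ ‖x‖ * (‖u x‖ * ‖fderiv ℝ u x‖) := by
  set L := fderiv ℝ u x with hL
  set v : Pt := (-(x 1)) • EuclideanSpace.single (0 : Fin 2) (1:ℝ)
      + (x 0) • EuclideanSpace.single (1 : Fin 2) (1:ℝ) with hv
  have hre : rotDen u x = (Complex.I * u x * (starRingEnd ℂ) (L v)).re := by
    have h1 : L v = (-(x 1)) • L (EuclideanSpace.single (0 : Fin 2) (1:ℝ))
        + (x 0) • L (EuclideanSpace.single (1 : Fin 2) (1:ℝ)) := by
      rw [hv, map_add, L.map_smul, L.map_smul]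
    rw [h1, Complex.real_smul, Complex.real_smul, map_add, map_mul, map_mul,
      Complex.conj_ofReal, Complex.conj_ofReal, mul_add,
      mul_left_comm (Complex.I * u x) (((-(x 1) : ℝ)) : ℂ),
      mul_left_comm (Complex.I * u x) (((x 0 : ℝ)) : ℂ),
      Complex.add_re, Complex.re_ofReal_mul, Complex.re_ofReal_mul]
    simp only [rotDen, ← hL]
  have hnv : ‖v‖ = ‖x‖ := by
    rw [hv, EuclideanSpace.norm_eq, EuclideanSpace.norm_eq]
    congr 1
    simp [Fin.sum_univ_two, EuclideanSpace.single_apply, Real.norm_eq_abs, sq_abs]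
    ring
  rw [hre]
  calc |(Complex.I * u x * (starRingEnd ℂ) (L v)).re|
      ≤ ‖Complex.I * u x * (starRingEnd ℂ) (L v)‖ := Complex.abs_re_le_norm _
    _ = ‖u x‖ * ‖L v‖ := by
        simp [norm_mul]
    _ ≤ ‖u x‖ * (‖L‖ * ‖v‖) := by
        gcongr
        exact L.le_opNorm v
    _ = ‖x‖ * (‖u x‖ * ‖L‖) := by rw [hnv]; ring

lemma comp_rot_bound (Om R : ℝ) (hOm : 0 < Om) (hR : 0 ≤ R) (u : Pt → ℂ)
    (hu : InH u) :
    Om * |∫ x : Pt, rotDen u x| ≤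
      (∫ x : Pt, ‖fderiv ℝ u x‖ ^ 2 / 4) + Om ^ 2 * R ^ 2
      + Om ^ 2 * ∫ x in {x : Pt | R ≤ ‖x‖}, (‖x‖ ^ 2 - R ^ 2) * ‖u x‖ ^ 2 := by
  obtain ⟨hI0, hI1, hI2, hn⟩ := hu
  have hS : MeasurableSet {x : Pt | R ≤ ‖x‖} :=
    (isClosed_le continuous_const continuous_norm).measurableSet
  have hker : 0 ≤ ∫ x : Pt, ‖fderiv ℝ u x‖ ^ 2 / 4 :=
    integral_nonneg fun x => by positivity
  have hint2 : Integrable (fun x : Pt => (‖x‖ ^ 2 - R ^ 2) * ‖u x‖ ^ 2) := by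
    have h := hI2.sub (hI0.const_mul (R ^ 2))
    exact h.congr (Filter.Eventually.of_forall fun x => by simp only [Pi.sub_apply]; ring)
  have htail : 0 ≤ ∫ x in {x : Pt | R ≤ ‖x‖}, (‖x‖ ^ 2 - R ^ 2) * ‖u x‖ ^ 2 := by
    refine setIntegral_nonneg hS fun x hx => ?_
    have hx' : R ≤ ‖x‖ := hx
    have h2 : R ^ 2 ≤ ‖x‖ ^ 2 := by nlinarith [norm_nonneg x]
    have := sq_nonneg ‖u x‖
    nlinarith
  by_cases hint : Integrable (rotDen u)
  · have hdom : ∀ x : Pt, Om * |rotDen u x| ≤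
        ‖fderiv ℝ u x‖ ^ 2 / 4 + Om ^ 2 * (‖x‖ ^ 2 * ‖u x‖ ^ 2) := by
      intro x
      have h1 := rotDen_abs_le_aux u x
      nlinarith [sq_nonneg (‖fderiv ℝ u x‖ / 2 - Om * (‖x‖ * ‖u x‖)),
        norm_nonneg (u x), norm_nonneg x, norm_nonneg (fderiv ℝ u x),
        abs_nonneg (rotDen u x), hOm.le,
        mul_le_mul_of_nonneg_left h1 hOm.le]
    have hgint : Integrable
        (fun x : Pt => ‖fderiv ℝ u x‖ ^ 2 / 4 + Om ^ 2 * (‖x‖ ^ 2 * ‖u x‖ ^ 2)) :=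
      (hI1.div_const 4).add (hI2.const_mul _)
    have step1 : Om * |∫ x : Pt, rotDen u x| ≤
        ∫ x : Pt, (‖fderiv ℝ u x‖ ^ 2 / 4 + Om ^ 2 * (‖x‖ ^ 2 * ‖u x‖ ^ 2)) := by
      calc Om * |∫ x : Pt, rotDen u x| ≤ Om * ∫ x : Pt, |rotDen u x| := by
            gcongr
            simpa [Real.norm_eq_abs] using
              norm_integral_le_integral_norm (μ := volume) (rotDen u)
        _ = ∫ x : Pt, Om * |rotDen u x| := (integral_const_mul Om _).symm
        _ ≤ _ := integral_mono (hint.abs.const_mul Om) hgint hdom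
    rw [integral_add (hI1.div_const 4) (hI2.const_mul _), integral_const_mul]
      at step1
    have hmass : ∫ x : Pt, ‖x‖ ^ 2 * ‖u x‖ ^ 2 ≤
        R ^ 2 + ∫ x in {x : Pt | R ≤ ‖x‖}, (‖x‖ ^ 2 - R ^ 2) * ‖u x‖ ^ 2 := by
      have hsplit : ∫ x : Pt, (‖x‖ ^ 2 - R ^ 2) * ‖u x‖ ^ 2
          = (∫ x : Pt, ‖x‖ ^ 2 * ‖u x‖ ^ 2) - R ^ 2 := by
        have heq : (fun x : Pt => (‖x‖ ^ 2 - R ^ 2) * ‖u x‖ ^ 2)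
            = fun x => ‖x‖ ^ 2 * ‖u x‖ ^ 2 - R ^ 2 * ‖u x‖ ^ 2 := by
          funext x; ring
        rw [heq, integral_sub hI2 (hI0.const_mul _), integral_const_mul, hn,
          mul_one]
      have hle : ∫ x : Pt, (‖x‖ ^ 2 - R ^ 2) * ‖u x‖ ^ 2
          ≤ ∫ x in {x : Pt | R ≤ ‖x‖}, (‖x‖ ^ 2 - R ^ 2) * ‖u x‖ ^ 2 := by
        rw [← integral_indicator hS]
        refine integral_mono hint2 (hint2.indicator hS) fun x => ?_
        by_cases hx : x ∈ {x : Pt | R ≤ ‖x‖}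
        · rw [Set.indicator_of_mem hx]
        · rw [Set.indicator_of_notMem hx]
          have hlt : ‖x‖ < R := lt_of_not_ge hx
          have h2 : ‖x‖ ^ 2 ≤ R ^ 2 := by nlinarith [norm_nonneg x]
          nlinarith [sq_nonneg ‖u x‖]
      linarith
    nlinarith [sq_nonneg Om]
  · rw [integral_undef hint]
    simp only [abs_zero, mul_zero]
    positivity

set_option maxHeartbeats 1600000 in
/-- Bound for the rotation term of the energy in terms of the
kinetic energy and weighted mass outside the limiting supports. -/
theorem rotation_term_bound
    (g₁ g₂ g Om : ℝ)
    (hg₁ : 0 < g₁) (h12 : g₁ ≤ g₂) (hg : 0 < g)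
    (hcoex : g ^ 2 < g₁ * g₂)
    (hdisks : g < (g₁ + Real.sqrt (g₁ ^ 2 + 8 * g₁ * g₂)) / 4)
    (hOm : 0 < Om)
    (u₁ u₂ : Pt → ℂ) (hu₁ : InH u₁) (hu₂ : InH u₂) :
    Om * |∫ x : Pt, rotDen u₁ x| + Om * |∫ x : Pt, rotDen u₂ x| ≤
      (∫ x : Pt, ‖fderiv ℝ u₁ x‖ ^ 2 / 4) + (∫ x : Pt, ‖fderiv ℝ u₂ x‖ ^ 2 / 4)
      + 2 * Om ^ 2 * (R10 g₁ g₂ g ^ 2 + R20 g₁ g₂ g ^ 2)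
      + 2 * Om ^ 2 * g₁ * Gam0 g₁ g₂ g / Gam2 g₂ g *
          (∫ x in {x : Pt | R10 g₁ g₂ g ≤ ‖x‖},
            nPart (a10 g₁ g₂ g x) * ‖u₁ x‖ ^ 2)
      + 2 * Om ^ 2 * g₂ *
          (∫ x in {x : Pt | R20 g₁ g₂ g ≤ ‖x‖},
            nPart (a20 g₁ g₂ g x + g / g₂ * a10 g₁ g₂ g x) * ‖u₂ x‖ ^ 2) := by
  have hg₂ : 0 < g₂ := lt_of_lt_of_le hg₁ h12
  have hgg₂ : g < g₂ := by nlinarith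
  have hΓ2 : 0 < Gam2 g₂ g := by
    have : g / g₂ < 1 := (div_lt_one hg₂).2 hgg₂
    simp only [Gam2]; linarith
  have hΓ0 : 0 < Gam0 g₁ g₂ g := by
    have : g ^ 2 / (g₁ * g₂) < 1 := (div_lt_one (by positivity)).2 hcoex
    simp only [Gam0]; linarith
  have hR1 : 0 ≤ R10 g₁ g₂ g := Real.rpow_nonneg (by positivity) _
  have hR2 : 0 ≤ R20 g₁ g₂ g := Real.rpow_nonneg (by positivity) _
  have hS1 : MeasurableSet {x : Pt | R10 g₁ g₂ g ≤ ‖x‖} :=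
    (isClosed_le continuous_const continuous_norm).measurableSet
  have hS2 : MeasurableSet {x : Pt | R20 g₁ g₂ g ≤ ‖x‖} :=
    (isClosed_le continuous_const continuous_norm).measurableSet
  have key1 := comp_rot_bound Om (R10 g₁ g₂ g) hOm hR1 u₁ hu₁
  have key2 := comp_rot_bound Om (R20 g₁ g₂ g) hOm hR2 u₂ hu₂
  have e1 : ∫ x in {x : Pt | R10 g₁ g₂ g ≤ ‖x‖}, nPart (a10 g₁ g₂ g x) * ‖u₁ x‖ ^ 2
      = Gam2 g₂ g / (g₁ * Gam0 g₁ g₂ g) *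
        ∫ x in {x : Pt | R10 g₁ g₂ g ≤ ‖x‖},
          (‖x‖ ^ 2 - R10 g₁ g₂ g ^ 2) * ‖u₁ x‖ ^ 2 := by
    rw [← integral_const_mul]
    refine setIntegral_congr_fun hS1 fun x hx => ?_
    have hx' : R10 g₁ g₂ g ≤ ‖x‖ := hx
    have hsq : R10 g₁ g₂ g ^ 2 ≤ ‖x‖ ^ 2 := by nlinarith [norm_nonneg x]
    have hc : 0 ≤ Gam2 g₂ g / (g₁ * Gam0 g₁ g₂ g) := by positivity
    have ha : a10 g₁ g₂ g x ≤ 0 := by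
      simp only [a10]
      exact mul_nonpos_of_nonneg_of_nonpos hc (by linarith)
    simp only [nPart]
    rw [max_eq_left (neg_nonneg.2 ha)]
    simp only [a10]; ring
  have h1 : g₁ ≠ 0 := ne_of_gt hg₁
  have h2 : g₂ ≠ 0 := ne_of_gt hg₂
  have h0 : Gam0 g₁ g₂ g ≠ 0 := ne_of_gt hΓ0
  have hkey : g₁ * Gam1 g₁ g + g * Gam2 g₂ g = g₁ * Gam0 g₁ g₂ g := by
    simp only [Gam1, Gam2, Gam0]
    field_simp
    ring
  have hco : Gam1 g₁ g / (g₂ * Gam0 g₁ g₂ g)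
      + g / g₂ * (Gam2 g₂ g / (g₁ * Gam0 g₁ g₂ g)) = 1 / g₂ := by
    have hsum : Gam1 g₁ g / (g₂ * Gam0 g₁ g₂ g)
        + g / g₂ * (Gam2 g₂ g / (g₁ * Gam0 g₁ g₂ g))
        = (g₁ * Gam1 g₁ g + g * Gam2 g₂ g) / (g₁ * (g₂ * Gam0 g₁ g₂ g)) := by
      field_simp
    rw [hsum, hkey]
    field_simp
  have haid : ∀ x : Pt, a20 g₁ g₂ g x + g / g₂ * a10 g₁ g₂ g x
      = (R20 g₁ g₂ g ^ 2 - ‖x‖ ^ 2) / g₂ := by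
    intro x
    have hexp : a20 g₁ g₂ g x + g / g₂ * a10 g₁ g₂ g x
        = (R20 g₁ g₂ g ^ 2 - R10 g₁ g₂ g ^ 2) / g₂
          + (Gam1 g₁ g / (g₂ * Gam0 g₁ g₂ g)
            + g / g₂ * (Gam2 g₂ g / (g₁ * Gam0 g₁ g₂ g)))
            * (R10 g₁ g₂ g ^ 2 - ‖x‖ ^ 2) := by
      simp only [a20, a10]
      ring
    rw [hexp, hco]
    ring
  have e2 : ∫ x in {x : Pt | R20 g₁ g₂ g ≤ ‖x‖},
        nPart (a20 g₁ g₂ g x + g / g₂ * a10 g₁ g₂ g x) * ‖u₂ x‖ ^ 2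
      = (1 / g₂) * ∫ x in {x : Pt | R20 g₁ g₂ g ≤ ‖x‖},
          (‖x‖ ^ 2 - R20 g₁ g₂ g ^ 2) * ‖u₂ x‖ ^ 2 := by
    rw [← integral_const_mul]
    refine setIntegral_congr_fun hS2 fun x hx => ?_
    have hx' : R20 g₁ g₂ g ≤ ‖x‖ := hx
    have hsq : R20 g₁ g₂ g ^ 2 ≤ ‖x‖ ^ 2 := by nlinarith [norm_nonneg x]
    rw [haid x]
    have ha : (R20 g₁ g₂ g ^ 2 - ‖x‖ ^ 2) / g₂ ≤ 0 :=
      div_nonpos_of_nonpos_of_nonneg (by linarith) hg₂.le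
    simp only [nPart]
    rw [max_eq_left (neg_nonneg.2 ha)]
    ring
  have hI₁nn : 0 ≤ ∫ x in {x : Pt | R10 g₁ g₂ g ≤ ‖x‖},
      (‖x‖ ^ 2 - R10 g₁ g₂ g ^ 2) * ‖u₁ x‖ ^ 2 := by
    refine setIntegral_nonneg hS1 fun x hx => ?_
    have hx' : R10 g₁ g₂ g ≤ ‖x‖ := hx
    have h2 : R10 g₁ g₂ g ^ 2 ≤ ‖x‖ ^ 2 := by nlinarith [norm_nonneg x]
    exact mul_nonneg (by linarith) (sq_nonneg _)
  have hI₂nn : 0 ≤ ∫ x in {x : Pt | R20 g₁ g₂ g ≤ ‖x‖},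
      (‖x‖ ^ 2 - R20 g₁ g₂ g ^ 2) * ‖u₂ x‖ ^ 2 := by
    refine setIntegral_nonneg hS2 fun x hx => ?_
    have hx' : R20 g₁ g₂ g ≤ ‖x‖ := hx
    have h2 : R20 g₁ g₂ g ^ 2 ≤ ‖x‖ ^ 2 := by nlinarith [norm_nonneg x]
    exact mul_nonneg (by linarith) (sq_nonneg _)
  rw [e1, e2]
  set I₁ := ∫ x in {x : Pt | R10 g₁ g₂ g ≤ ‖x‖},
      (‖x‖ ^ 2 - R10 g₁ g₂ g ^ 2) * ‖u₁ x‖ ^ 2 with hI₁def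
  set I₂ := ∫ x in {x : Pt | R20 g₁ g₂ g ≤ ‖x‖},
      (‖x‖ ^ 2 - R20 g₁ g₂ g ^ 2) * ‖u₂ x‖ ^ 2 with hI₂def
  have hΓ2ne : Gam2 g₂ g ≠ 0 := ne_of_gt hΓ2
  have r1 : 2 * Om ^ 2 * g₁ * Gam0 g₁ g₂ g / Gam2 g₂ g *
      (Gam2 g₂ g / (g₁ * Gam0 g₁ g₂ g) * I₁) = 2 * Om ^ 2 * I₁ := by
    field_simp
  have r2 : 2 * Om ^ 2 * g₂ * (1 / g₂ * I₂) = 2 * Om ^ 2 * I₂ := by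
    field_simp
  rw [r1, r2]
  nlinarith [mul_nonneg (sq_nonneg Om) hI₁nn, mul_nonneg (sq_nonneg Om) hI₂nn,
    mul_nonneg (sq_nonneg Om) (mul_self_nonneg (R10 g₁ g₂ g)),
    mul_nonneg (sq_nonneg Om) (mul_self_nonneg (R20 g₁ g₂ g)),
    sq_nonneg (R10 g₁ g₂ g), sq_nonneg (R20 g₁ g₂ g), sq_nonneg Om,
    mul_nonneg (sq_nonneg Om) (sq_nonneg (R10 g₁ g₂ g)),
    mul_nonneg (sq_nonneg Om) (sq_nonneg (R20 g₁ g₂ g))]
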